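/- Let G be a real n×m matrix with L = G^T G invertible, and R a real n×k matrix with C = R^T R invertible. Define B = R^T G and the primal Schur complement S_p = L + B^T C^{-1} B. Then every eigenvalue of L^{-1} S_p lies in the closed interval [1, 2]. -/
import Mathlib


open Matrix

private lemma dps_nonneg {p : ℕ} (w : Fin p → ℝ) : 0 ≤ w ⬝ᵥ w :=
  Finset.sum_nonneg fun i _ => mul_self_nonneg (w i)

theorem stmt1 (n m k : ℕ)
    (G : Matrix (Fin n) (Fin m) ℝ) (R : Matrix (Fin n) (Fin k) ℝ)
    (L : Matrix (Fin m) (Fin m) ℝ) (C : Matrix (Fin k) (Fin k) ℝ)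
    (B : Matrix (Fin k) (Fin m) ℝ) (Sp : Matrix (Fin m) (Fin m) ℝ)
    (hLdef : L = Gᵀ * G) (hCdef : C = Rᵀ * R)
    (hBdef : B = Rᵀ * G)
    (hL : IsUnit L) (hC : IsUnit C)
    (hSp : Sp = L + Bᵀ * C⁻¹ * B)
    (lam : ℝ) (v : Fin m → ℝ) (hv : v ≠ 0)
    (heig : (L⁻¹ * Sp).mulVec v = lam • v) :
    1 ≤ lam ∧ lam ≤ 2 := by
  have hLd : IsUnit L.det := (Matrix.isUnit_iff_isUnit_det L).mp hL
  have hCd : IsUnit C.det := (Matrix.isUnit_iff_isUnit_det C).mp hC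
  set w : Fin n → ℝ := G.mulVec v with hw
  set t : Fin k → ℝ := C⁻¹.mulVec (B.mulVec v) with ht
  have hLinv : L * L⁻¹ = 1 := mul_nonsing_inv L hLd
  have hCinv : C * C⁻¹ = 1 := mul_nonsing_inv C hCd
  -- Sp v = lam • (L v)
  have hSpv : Sp.mulVec v = lam • L.mulVec v := by
    have := congrArg (fun u => L.mulVec u) heig
    simpa [Matrix.mulVec_mulVec, ← Matrix.mul_assoc, hLinv, Matrix.mulVec_smul] using this
  -- transpose trick
  have key : ∀ (p q : ℕ) (A : Matrix (Fin p) (Fin q) ℝ) (x : Fin q → ℝ) (y : Fin p → ℝ),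
      x ⬝ᵥ Aᵀ.mulVec y = (A.mulVec x) ⬝ᵥ y := by
    intro p q A x y
    rw [Matrix.dotProduct_mulVec, Matrix.vecMul_transpose]
  have ha : v ⬝ᵥ L.mulVec v = w ⬝ᵥ w := by
    rw [hLdef, ← Matrix.mulVec_mulVec, key]
  set a : ℝ := w ⬝ᵥ w with hadef
  have haw : 0 < a := by
    rcases lt_or_eq_of_le (dps_nonneg w) with h | h
    · exact h
    · exfalso
      have hw0 : w = 0 := dotProduct_self_eq_zero.mp h.symm
      have h1 : L.mulVec v = 0 := by
        rw [hLdef, ← Matrix.mulVec_mulVec, ← hw, hw0, Matrix.mulVec_zero]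
      have hv0 : v = 0 := by
        have := congrArg (fun u => L⁻¹.mulVec u) h1
        simpa [Matrix.mulVec_mulVec, nonsing_inv_mul L hLd, Matrix.mulVec_zero] using this
      exact hv hv0
  set q : ℝ := v ⬝ᵥ (Bᵀ * C⁻¹ * B).mulVec v with hq
  have hCt : C.mulVec t = B.mulVec v := by
    rw [ht, Matrix.mulVec_mulVec, hCinv, Matrix.one_mulVec]
  have hBv : B.mulVec v = Rᵀ.mulVec w := by
    rw [hBdef, ← Matrix.mulVec_mulVec, hw]
  have e1 : (Bᵀ * C⁻¹ * B).mulVec v = Bᵀ.mulVec t := by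
    rw [ht, Matrix.mulVec_mulVec, Matrix.mulVec_mulVec]
  have hqB : q = (B.mulVec v) ⬝ᵥ t := by rw [hq, e1, key]
  have hq1 : q = w ⬝ᵥ R.mulVec t := by
    rw [hqB, hBv, dotProduct_comm, key, dotProduct_comm]
  have hq2 : q = (R.mulVec t) ⬝ᵥ (R.mulVec t) := by
    rw [hqB, ← hCt, hCdef, ← Matrix.mulVec_mulVec, dotProduct_comm, key]
  have hq0 : 0 ≤ q := hq2 ▸ dps_nonneg _
  have hcs : q ^ 2 ≤ a * q := by
    have hCS := Finset.sum_mul_sq_le_sq_mul_sq Finset.univ w (R.mulVec t)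
    calc q ^ 2 = (∑ i, w i * R.mulVec t i) ^ 2 := by rw [hq1]; rfl
      _ ≤ (∑ i, w i ^ 2) * ∑ i, R.mulVec t i ^ 2 := hCS
      _ = a * q := by rw [hadef, hq2]; simp [dotProduct, sq]
  have hqa : q ≤ a := by
    rcases eq_or_lt_of_le hq0 with h | h
    · linarith
    · nlinarith
  have hmain : lam * a = a + q := by
    have h2 := congrArg (fun u => v ⬝ᵥ u) hSpv
    simp only [hSp, Matrix.add_mulVec, dotProduct_add, dotProduct_smul,
      smul_eq_mul] at h2
    rw [ha, ← hq] at h2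
    linarith
  constructor
  · nlinarith
  · nlinarith
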